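/- arXiv:2003.08118 — 3 statements merged into one kernel-verified Lean document; each statement's English description precedes it below -/
import Mathlib

section
/- Let G ∈ 𝓔_c, L a subgroup of G, and x, y ∈ G \ L elements such that (1) the order of x is an odd prime or equal to 4, and (2) the orders of the cosets Lx and Ly, considered as elements of the quotient group G/L, are equal. Then there exists y' ∈ Ly whose order equals the order of x. -/
open scoped Pointwise

noncomputable section

namespace Paper

/-- The element `∑_{x ∈ X} x` of the integer group ring `ℤG`. -/
def sumElems {G : Type*} [Group G] [Finite G] (X : Set G) : MonoidAlgebra ℤ G :=
  ∑ x ∈ X.toFinite.toFinset, MonoidAlgebra.single x (1 : ℤ)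

/-- A Schur ring (S-ring) over a finite group `G`, described by the partition of `G`
into its basic sets: the partition contains `{1}`, is closed under taking inverses,
and its `ℤ`-span inside the group ring `ℤG` is closed under multiplication
(hence is a subring of `ℤG`). -/
structure SRing (G : Type*) [Group G] [Finite G] where
  basic : Set (Set G)
  nonempty : ∀ X ∈ basic, X.Nonempty
  cover : ∀ g : G, ∃! X, X ∈ basic ∧ g ∈ X
  one_mem : ({1} : Set G) ∈ basic
  inv_mem : ∀ X ∈ basic, X⁻¹ ∈ basic
  mul_mem : ∀ a b : MonoidAlgebra ℤ G,
    a ∈ Submodule.span ℤ (sumElems '' basic) →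
    b ∈ Submodule.span ℤ (sumElems '' basic) →
    a * b ∈ Submodule.span ℤ (sumElems '' basic)

namespace SRing

/-- The `ℤ`-module underlying an S-ring. -/
def span {G : Type*} [Group G] [Finite G] (A : SRing G) :
    Submodule ℤ (MonoidAlgebra ℤ G) :=
  Submodule.span ℤ (sumElems '' A.basic)

/-- A set `X ⊆ G` is an `𝒜`-set if `∑_{x ∈ X} x ∈ 𝒜`. -/
def IsASet {G : Type*} [Group G] [Finite G] (A : SRing G) (X : Set G) : Prop :=
  sumElems X ∈ A.span

/-- A subgroup which is an `𝒜`-set is an `𝒜`-subgroup. -/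
def IsASubgroup {G : Type*} [Group G] [Finite G] (A : SRing G) (H : Subgroup G) : Prop :=
  A.IsASet (H : Set G)

end SRing

/-- The arc set `R(X) = {(g, xg) : x ∈ X, g ∈ G}` of the Cayley digraph `Cay(G, X)`. -/
def Rel {G : Type*} [Group G] (X : Set G) : Set (G × G) := {p | p.2 * p.1⁻¹ ∈ X}

/-- `f : G ≃ G'` is an isomorphism from the S-ring `A` over `G` to the S-ring `B`
over `G'` if `{R(X)^f : X ∈ 𝒮(A)} = {R(Y) : Y ∈ 𝒮(B)}`. -/
def IsSRingIso {G G' : Type*} [Group G] [Finite G] [Group G'] [Finite G']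
    (A : SRing G) (B : SRing G') (f : G ≃ G') : Prop :=
  (fun X => Prod.map f f '' Rel X) '' A.basic = Rel '' B.basic

/-- The automorphism group `Aut(𝒜)` of an S-ring, as a set of permutations of `G`. -/
def SRing.autSet {G : Type*} [Group G] [Finite G] (A : SRing G) : Set (Equiv.Perm G) :=
  {f | ∀ X ∈ A.basic, Prod.map f f '' Rel X = Rel X}

/-- The set `Iso(𝒜)` of isomorphisms from `𝒜` onto S-rings over the same group `G`. -/
def SRing.isoSet {G : Type*} [Group G] [Finite G] (A : SRing G) : Set (Equiv.Perm G) :=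
  {f | ∃ B : SRing G, IsSRingIso A B f}

/-- `Aut(G)` as a set of permutations of `G`. -/
def autPerm (G : Type*) [Group G] : Set (Equiv.Perm G) :=
  Set.range fun φ : G ≃* G => (φ.toEquiv : Equiv.Perm G)

/-- A CI-S-ring: `Aut(𝒜)·Aut(G) = Iso(𝒜)`. -/
def SRing.IsCI {G : Type*} [Group G] [Finite G] (A : SRing G) : Prop :=
  A.autSet * autPerm G = A.isoSet

/-- The orbits on `G` of a set of automorphisms of `G`. -/
def setOrbits {G : Type*} [Group G] (Δ : Set (MulAut G)) : Set (Set G) :=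
  Set.range fun g : G => (fun φ : MulAut G => φ g) '' Δ

/-- An S-ring is cyclotomic if its basic sets are exactly the orbits of some
subgroup `K ≤ Aut(G)`. -/
def SRing.IsCyclotomic {G : Type*} [Group G] [Finite G] (A : SRing G) : Prop :=
  ∃ K : Subgroup (MulAut G), A.basic = setOrbits (K : Set (MulAut G))

/-- `Aut_G(𝒜) = Aut(𝒜) ∩ Aut(G)`, as a set of automorphisms of `G`. -/
def SRing.autGSet {G : Type*} [Group G] [Finite G] (A : SRing G) : Set (MulAut G) :=
  {φ | (φ.toEquiv : Equiv.Perm G) ∈ A.autSet}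

/-- A (cyclotomic) S-ring is Cayley minimal if `Aut_G(𝒜)` is the only subgroup of
`Aut(G)` whose orbits on `G` coincide with those of `Aut_G(𝒜)`. -/
def SRing.IsCayleyMinimal {G : Type*} [Group G] [Finite G] (A : SRing G) : Prop :=
  ∀ K : Subgroup (MulAut G),
    setOrbits (K : Set (MulAut G)) = setOrbits A.autGSet →
    (K : Set (MulAut G)) = A.autGSet

/-- `rad(X) = {g ∈ G : gX = Xg = X}`. -/
def rad {G : Type*} [Group G] (X : Set G) : Set G := {g | {g} * X = X ∧ X * {g} = X}

/-- The class `𝓔_c` of finite abelian groups all of whose Sylow subgroups are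
elementary abelian or isomorphic to `C₄`. -/
def InEc (G : Type*) [CommGroup G] [Finite G] : Prop :=
  ∀ p : ℕ, p.Prime → ∀ P : Sylow p G,
    (∀ x : ↥(P : Subgroup G), x ^ p = 1) ∨
    Nonempty (↥(P : Subgroup G) ≃* Multiplicative (ZMod 4))

/-- A finite group `G` is a `DCI`-group if any two Cayley digraphs over `G` that are
isomorphic as digraphs are Cayley isomorphic. -/
def IsDCIGroup (G : Type*) [Group G] : Prop :=
  ∀ S T : Set G,
    (∃ f : G ≃ G, ∀ g h : G, h * g⁻¹ ∈ S ↔ f h * (f g)⁻¹ ∈ T) →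
    ∃ φ : G ≃* G, ⇑φ '' S = T

/-- The subgroup `G_r ≤ Sym(G)` of right translations of `G`. -/
def rightTranslations (G : Type*) [Group G] : Subgroup (Equiv.Perm G) where
  carrier := Set.range fun g : G => Equiv.mulRight g
  one_mem' := ⟨1, by ext x; simp⟩
  mul_mem' := by
    rintro _ _ ⟨a, rfl⟩ ⟨b, rfl⟩
    exact ⟨b * a, by ext x; simp [mul_assoc]⟩
  inv_mem' := by
    rintro _ ⟨a, rfl⟩
    exact ⟨a⁻¹, by ext x; simp⟩

/-- The basic sets of the S-ring `V(K, G)`: the orbits of the stabilizer `K_e`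
of the identity on `G`. -/
def VBasic {G : Type*} [Group G] (K : Subgroup (Equiv.Perm G)) : Set (Set G) :=
  Set.range fun g : G => MulAction.orbit (MulAction.stabilizer K (1 : G)) g

/-- A subgroup `R ≤ Sym(G)` is regular if for all `g, h ∈ G` there is a
unique `r ∈ R` with `r(g) = h`. -/
def IsRegularSubgroup {G : Type*} [Group G] (R : Subgroup (Equiv.Perm G)) : Prop :=
  ∀ g h : G, ∃! r : R, (r : Equiv.Perm G) g = h

/-- `K ∈ Sup(G_r)`. -/
def InSup {G : Type*} [Group G] (K : Subgroup (Equiv.Perm G)) : Prop :=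
  rightTranslations G ≤ K

/-- `K ∈ Sup₂(G_r)`, i.e. `K ≥ G_r` and `K = K^{(2)} = Aut(V(K,G))`. -/
def InSup2 {G : Type*} [Group G] [Finite G] (K : Subgroup (Equiv.Perm G)) : Prop :=
  InSup K ∧
    (K : Set (Equiv.Perm G)) =
      {f : Equiv.Perm G | ∀ X ∈ VBasic K, Prod.map (⇑f) (⇑f) '' Rel X = Rel X}

/-- `K₁ ⪯_G K₂`: `K₁ ≤ K₂` and every regular subgroup of `K₂` isomorphic to `G`
is conjugate in `K₂` to a subgroup of `K₁`. -/
def GComplete {G : Type*} [Group G] (K₁ K₂ : Subgroup (Equiv.Perm G)) : Prop :=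
  K₁ ≤ K₂ ∧ ∀ R : Subgroup (Equiv.Perm G), R ≤ K₂ → IsRegularSubgroup R →
    Nonempty (↥R ≃* G) → ∃ k ∈ K₂, ∀ r ∈ R, k * r * k⁻¹ ∈ K₁

/-- `K ∈ Sup₂^min(G_r)`: a minimal element of `Sup₂(G_r)` with respect to `⪯_G`. -/
def InSup2Min {G : Type*} [Group G] [Finite G] (K : Subgroup (Equiv.Perm G)) : Prop :=
  InSup2 K ∧ ∀ K' : Subgroup (Equiv.Perm G), InSup2 K' → GComplete K' K → K' = K

/-- The basic sets of the restriction `𝒜_U` of `𝒜` to an `𝒜`-subgroup `U`: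
the basic sets of `𝒜` contained in `U`, viewed inside `U`. -/
def restrictBasic {G : Type*} [Group G] [Finite G] (A : SRing G) (U : Subgroup G) :
    Set (Set ↥U) :=
  {Y : Set ↥U | Subtype.val '' Y ∈ A.basic}

/-- The basic sets of the quotient S-ring `𝒜_{G/L}`: the images of the basic
sets of `𝒜` under the canonical epimorphism `G → G/L`. -/
def quotBasic {G : Type*} [CommGroup G] [Finite G] (A : SRing G) (L : Subgroup G) :
    Set (Set (G ⧸ L)) :=
  (fun X => QuotientGroup.mk '' X) '' A.basic

/-- The basic sets of the S-ring `𝒜_S` on the section `S = U/L`: the images under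
the canonical epimorphism `U → U/L` of the basic sets of `𝒜` contained in `U`. -/
def secBasic {G : Type*} [CommGroup G] [Finite G] (A : SRing G) (U L : Subgroup G) :
    Set (Set (↥U ⧸ L.subgroupOf U)) :=
  {Z | ∃ X ∈ A.basic, X ⊆ (U : Set G) ∧
    Z = QuotientGroup.mk '' (Subtype.val ⁻¹' X : Set ↥U)}

/-- The set of bijections of `H ⧸ N` induced by members of `Δ ⊆ Sym(H)`
permuting the `N`-cosets. -/
def inducedOnQuot {H : Type*} [CommGroup H] (N : Subgroup H) (Δ : Set (Equiv.Perm H)) :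
    Set (Equiv.Perm (H ⧸ N)) :=
  {σ | ∃ f ∈ Δ, ∀ x : H, σ (QuotientGroup.mk x) = QuotientGroup.mk (f x)}

/-- The canonical (injective) homomorphism `U/L → G/L` for `L ≤ U ≤ G`. -/
def secIncl {G : Type*} [CommGroup G] (U L : Subgroup G) :
    (↥U ⧸ L.subgroupOf U) →* G ⧸ L :=
  QuotientGroup.map (L.subgroupOf U) L U.subtype (fun _ hx => hx)

/-- The set of bijections of the section `S = U/L` induced by members of
`Δ ⊆ Sym(G/L)` preserving `S` (i.e. permuting the `L`-cosets contained in `U`). -/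
def inducedOnSec {G : Type*} [CommGroup G] (U L : Subgroup G)
    (Δ : Set (Equiv.Perm (G ⧸ L))) : Set (Equiv.Perm (↥U ⧸ L.subgroupOf U)) :=
  {σ | ∃ φ ∈ Δ, ∀ x : ↥U,
    φ (QuotientGroup.mk (x : G) : G ⧸ L) = secIncl U L (σ (QuotientGroup.mk x))}

/-- The basic sets of the S-ring `(ℤL ⊗ 𝒜_V) ≀_{(V×L)/V} ℤ(U/V)` over `U`,
where `Lu, V ≤ U` and `𝒜_V` is the restriction of `𝒜_U` to `V`. -/
def tensorWreathBasic {U : Type*} [CommGroup U] [Finite U] (AU : SRing U)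
    (Lu V : Subgroup U) : Set (Set U) :=
  {Z | (∃ l ∈ Lu, ∃ X ∈ AU.basic, X ⊆ (V : Set U) ∧ Z = l • X) ∨
       (∃ u : U, u ∉ Lu ⊔ V ∧ Z = u • (V : Set U))}

/-- Condition (CA): `𝒜_S = ℤS`. -/
def CondCA {G : Type*} [CommGroup G] [Finite G] (A : SRing G) (U L : Subgroup G) : Prop :=
  ∀ AS : SRing (↥U ⧸ L.subgroupOf U), AS.basic = secBasic A U L →
    AS.basic = Set.range fun s => ({s} : Set (↥U ⧸ L.subgroupOf U))

/-- Condition (CA'): `𝒜_U` or `𝒜_{G/L}` is cyclotomic and `𝒜_S` is Cayley minimal. -/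
def CondCA' {G : Type*} [CommGroup G] [Finite G] (A : SRing G) (U L : Subgroup G) : Prop :=
  ((∀ AU : SRing ↥U, AU.basic = restrictBasic A U → AU.IsCyclotomic) ∨
   (∀ AQ : SRing (G ⧸ L), AQ.basic = quotBasic A L → AQ.IsCyclotomic)) ∧
  (∀ AS : SRing (↥U ⧸ L.subgroupOf U), AS.basic = secBasic A U L → AS.IsCayleyMinimal)

/-- Condition (CA''): `U ≅ C_{4p}`, `L ≅ C₂` and
`𝒜_U = (ℤL ⊗ 𝒜_V) ≀_{(V×L)/V} ℤ(U/V)` for an `𝒜_U`-subgroup `V` of order `p`. -/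
def CondCA'' {G : Type*} [CommGroup G] [Finite G] (p : ℕ) (A : SRing G)
    (U L : Subgroup G) : Prop :=
  Nat.card ↥U = 4 * p ∧ IsCyclic ↥U ∧ Nat.card ↥L = 2 ∧
  ∀ AU : SRing ↥U, AU.basic = restrictBasic A U →
    ∃ V : Subgroup ↥U, AU.IsASubgroup V ∧ Nat.card ↥V = p ∧
      AU.basic = tensorWreathBasic AU (L.subgroupOf U) V

/-- `𝒜 = 𝒜_{G₁} ⊗ 𝒜_{G₂}` for `G = G₁ × G₂` (internally). -/
def IsTensorDecomp {G : Type*} [CommGroup G] [Finite G] (A : SRing G)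
    (G₁ G₂ : Subgroup G) : Prop :=
  A.IsASubgroup G₁ ∧ A.IsASubgroup G₂ ∧ G₁ ⊓ G₂ = ⊥ ∧ G₁ ⊔ G₂ = ⊤ ∧
  A.basic = {Z | ∃ X ∈ A.basic, ∃ Y ∈ A.basic,
    X ⊆ (G₁ : Set G) ∧ Y ⊆ (G₂ : Set G) ∧ Z = X * Y}

/-- `𝒜` is the tensor product of two S-rings over proper nontrivial subgroups of `G`. -/
def TensorConclusion {G : Type*} [CommGroup G] [Finite G] (A : SRing G) : Prop :=
  ∃ G₁ G₂ : Subgroup G, G₁ ≠ ⊥ ∧ G₁ ≠ ⊤ ∧ G₂ ≠ ⊥ ∧ G₂ ≠ ⊤ ∧ IsTensorDecomp A G₁ G₂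

/-- `𝒜` is a nontrivial `S = U/L`-wreath product satisfying one of the
conditions (CA), (CA'), (CA''). -/
def WreathConclusion {G : Type*} [CommGroup G] [Finite G] (p : ℕ) (A : SRing G) : Prop :=
  ∃ U L : Subgroup G, L ≤ U ∧ A.IsASubgroup U ∧ A.IsASubgroup L ∧ L ≠ ⊥ ∧ U ≠ ⊤ ∧
    (∀ X ∈ A.basic, ¬ X ⊆ (U : Set G) → (L : Set G) ⊆ rad X) ∧
    (CondCA A U L ∨ CondCA' A U L ∨ CondCA'' p A U L)

/-! Write `q` for the order of `x` and `n` for that of `y`. The common order `d` of `Lx` and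
`Ly` is a divisor `≠ 1` of `q`. A group in `𝓔_c` has no element of order `p²` (`p` odd) or `8`,
and once it has an element `x` of order `4` its only involution is `x²`. Hence `q ∣ n` with
`n / q` coprime to `q`: for `q = 4, d = 2` the involution of `⟨y⟩` is `x² ∈ L`, so `2 ∣ n / 2`.
As `y ^ q ∈ L`, it remains to find `t` such that `(y ^ q) ^ t * y ∈ Ly` has order `q`. -/

theorem exists_orderOf_pow_pow_mul_eq {M : Type*} [Monoid M] {y : M} {q : ℕ} (hq : 1 < q)
    (hdvd : q ∣ orderOf y) (hcop : (orderOf y / q).Coprime q) :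
    ∃ t, orderOf ((y ^ q) ^ t * y) = q := by
  set m := orderOf y / q
  have hy : orderOf y ≠ 0 := by
    rintro hy
    simp only [m, hy, Nat.zero_div, Nat.coprime_zero_left] at hcop
    omega
  -- `y ^ (m a)` has order `q` and, as `m a ≡ 1 [MOD q]`, is `y` times a power of `y ^ q`
  obtain ⟨a, -, ha⟩ := Nat.exists_mul_mod_eq_one_of_coprime hcop hq
  refine ⟨m * a / q, ?_⟩
  have hym : orderOf (y ^ m) = q := orderOf_pow_orderOf_div hy hdvd
  have hcop_a : a.Coprime q :=
    Nat.coprime_of_mul_modEq_one m <| by rw [Nat.ModEq, mul_comm, ha, Nat.mod_eq_of_lt hq]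
  calc orderOf ((y ^ q) ^ (m * a / q) * y)
      = orderOf ((y ^ m) ^ a) := by
        rw [← pow_mul, ← pow_succ, ← pow_mul, ← ha, Nat.div_add_mod]
    _ = q := by
        rw [Nat.Coprime.orderOf_pow (hym ▸ hcop_a.symm), hym]

theorem eq_of_orderOf_eq_two_of_mulEquiv_zmod_four {H : Type*} [Group H]
    (e : H ≃* Multiplicative (ZMod 4)) {a b : H} (ha : orderOf a = 2) (hb : orderOf b = 2) :
    a = b := by
  have key : ∀ u v : Multiplicative (ZMod 4), u ^ 2 = 1 ∧ u ≠ 1 → v ^ 2 = 1 ∧ v ≠ 1 → u = v := by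
    decide
  rw [← e.orderOf_eq, orderOf_eq_prime_iff] at ha hb
  exact e.injective (key _ _ ha hb)

namespace InEc

variable {G : Type*} [CommGroup G] [Finite G]

theorem orderOf_dvd_prime_or_four (hG : InEc G) {p : ℕ} (hp : p.Prime) (P : Sylow p G)
    {g : G} (hg : g ∈ P) : orderOf g ∣ p ∨ orderOf g ∣ 4 := by
  rcases hG p hp P with hexp | he
  · exact .inl <| orderOf_dvd_of_pow_eq_one <| congrArg Subtype.val (hexp ⟨g, hg⟩)
  · obtain ⟨e⟩ := he
    refine .inr ?_
    have hcard : Nat.card P = 4 := by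
      rw [Nat.card_congr e.toEquiv, Nat.card_congr Multiplicative.toAdd, Nat.card_zmod]
    exact hcard ▸ Subgroup.orderOf_dvd_natCard _ hg

theorem prime_pow_dvd_prime_or_four (hG : InEc G) {p k : ℕ} (hp : p.Prime) {g : G}
    (hdvd : p ^ k ∣ orderOf g) : p ^ k ∣ p ∨ p ^ k ∣ 4 := by
  have := Fact.mk hp
  obtain ⟨P, hP⟩ := (CommGroup.primaryComponent.isPGroup (G := G) (p := p)).exists_le_sylow
  have hord := orderOf_pow_orderOf_div (orderOf_pos g).ne' hdvd
  have hmem : g ^ (orderOf g / p ^ k) ∈ CommGroup.primaryComponent G p :=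
    CommGroup.mem_primaryComponent_iff_orderOf.mpr ⟨k, hord⟩
  simpa only [hord] using hG.orderOf_dvd_prime_or_four hp P (hP hmem)

theorem coprime_orderOf_div_of_odd_prime (hG : InEc G) {p : ℕ} (hp : p.Prime) (hodd : Odd p)
    {g : G} (hdvd : p ∣ orderOf g) : (orderOf g / p).Coprime p := by
  refine (hp.coprime_iff_not_dvd.mpr fun hsq ↦ ?_).symm
  rcases hG.prime_pow_dvd_prime_or_four (k := 2) hp
      (pow_two p ▸ (Nat.dvd_div_iff_mul_dvd hdvd).mp hsq) with h | h
  · exact absurd (Nat.le_of_dvd hp.pos h) (by nlinarith [hp.two_le])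
  · have h2 : p ∣ 2 :=
      hp.dvd_of_dvd_pow (show p ∣ 2 ^ 2 from (dvd_pow_self p two_ne_zero).trans h)
    rw [(Nat.prime_dvd_prime_iff_eq hp Nat.prime_two).mp h2] at hodd
    exact Nat.not_odd_iff_even.mpr even_two hodd

theorem coprime_orderOf_div_four (hG : InEc G) {g : G} (hdvd : 4 ∣ orderOf g) :
    (orderOf g / 4).Coprime 4 := by
  have hcop : (orderOf g / 4).Coprime 2 := by
    refine (Nat.prime_two.coprime_iff_not_dvd.mpr fun h2 ↦ ?_).symm
    have := hG.prime_pow_dvd_prime_or_four (k := 3) Nat.prime_two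
      ((Nat.dvd_div_iff_mul_dvd hdvd).mp h2)
    norm_num at this
  simpa using hcop.pow_right 2

theorem eq_sq_of_orderOf_eq_two (hG : InEc G) {x z : G} (hx : orderOf x = 4)
    (hz : orderOf z = 2) : z = x ^ 2 := by
  have := Fact.mk Nat.prime_two
  obtain ⟨P, hP⟩ := (CommGroup.primaryComponent.isPGroup (G := G) (p := 2)).exists_le_sylow
  have hxP : x ∈ P := hP <| CommGroup.mem_primaryComponent_iff_orderOf.mpr ⟨2, hx⟩
  have hzP : z ∈ P := hP <| CommGroup.mem_primaryComponent_iff_orderOf.mpr ⟨1, hz⟩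
  rcases hG 2 Nat.prime_two P with hexp | he
  · have := orderOf_dvd_of_pow_eq_one (hexp ⟨x, hxP⟩)
    rw [Subgroup.orderOf_mk, hx] at this
    norm_num at this
  · obtain ⟨e⟩ := he
    have hx2 : orderOf (⟨x, hxP⟩ ^ 2 : P) = 2 := by
      rw [orderOf_pow_of_dvd two_ne_zero (by rw [Subgroup.orderOf_mk, hx]; norm_num),
        Subgroup.orderOf_mk, hx]
    have hz2 : orderOf (⟨z, hzP⟩ : P) = 2 := by rw [Subgroup.orderOf_mk, hz]
    exact congrArg Subtype.val <| eq_of_orderOf_eq_two_of_mulEquiv_zmod_four e hz2 hx2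

theorem four_dvd_orderOf_of_orderOf_mk_eq_two (hG : InEc G) {L : Subgroup G} {x y : G}
    (hx : orderOf x = 4) (hxL : orderOf (x : G ⧸ L) = 2) (hyL : orderOf (y : G ⧸ L) = 2) :
    4 ∣ orderOf y := by
  have h2 : 2 ∣ orderOf y := hyL ▸ orderOf_map_dvd (QuotientGroup.mk' L) y
  have hz := orderOf_pow_orderOf_div (orderOf_pos y).ne' h2
  have hx2 : x ^ 2 ∈ L := by
    rw [← QuotientGroup.eq_one_iff, QuotientGroup.mk_pow, ← hxL, pow_orderOf_eq_one]
  have hyz : (y : G ⧸ L) ^ (orderOf y / 2) = 1 := by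
    rw [← QuotientGroup.mk_pow, QuotientGroup.eq_one_iff, hG.eq_sq_of_orderOf_eq_two hx hz]
    exact hx2
  exact (Nat.dvd_div_iff_mul_dvd h2).mp (hyL ▸ orderOf_dvd_of_pow_eq_one hyz)

theorem orderOf_dvd_orderOf_of_orderOf_mk_eq (hG : InEc G) {L : Subgroup G} {x y : G}
    (hy : y ∉ L) (hord : ((orderOf x).Prime ∧ Odd (orderOf x)) ∨ orderOf x = 4)
    (heq : orderOf (x : G ⧸ L) = orderOf (y : G ⧸ L)) :
    orderOf x ∣ orderOf y := by
  set d := orderOf (y : G ⧸ L)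
  have hdx : d ∣ orderOf x := heq ▸ orderOf_map_dvd (QuotientGroup.mk' L) x
  have hdy : d ∣ orderOf y := orderOf_map_dvd (QuotientGroup.mk' L) y
  have hd1 : d ≠ 1 := fun h ↦ hy <| (QuotientGroup.eq_one_iff y).mp (orderOf_eq_one_iff.mp h)
  rcases hord with ⟨hp, -⟩ | h4
  · rwa [← (hp.eq_one_or_self_of_dvd d hdx).resolve_left hd1]
  · rw [h4] at hdx ⊢
    have hd4 : d ≤ 4 := Nat.le_of_dvd (by norm_num) hdx
    obtain hd | hd : d = 2 ∨ d = 4 := by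
      interval_cases d <;> omega
    · exact hG.four_dvd_orderOf_of_orderOf_mk_eq_two h4 (heq.trans hd) hd
    · exact hd ▸ hdy

end InEc

theorem stmt3_general (G : Type*) [CommGroup G] [Finite G] (hG : InEc G)
    (L : Subgroup G) (x y : G) (hy : y ∉ L)
    (hord : ((orderOf x).Prime ∧ Odd (orderOf x)) ∨ orderOf x = 4)
    (heq : orderOf (QuotientGroup.mk x : G ⧸ L) = orderOf (QuotientGroup.mk y : G ⧸ L)) :
    ∃ y' ∈ (L : Set G) * {y}, orderOf y' = orderOf x := by
  have hq : 1 < orderOf x := by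
    rcases hord with ⟨hp, -⟩ | h4
    exacts [hp.one_lt, by omega]
  have hdvd := hG.orderOf_dvd_orderOf_of_orderOf_mk_eq hy hord heq
  have hcop : (orderOf y / orderOf x).Coprime (orderOf x) := by
    rcases hord with ⟨hp, hodd⟩ | h4
    · exact hG.coprime_orderOf_div_of_odd_prime hp hodd hdvd
    · exact h4 ▸ hG.coprime_orderOf_div_four (h4 ▸ hdvd)
  have hyq : y ^ orderOf x ∈ L := by
    rw [← QuotientGroup.eq_one_iff, QuotientGroup.mk_pow, orderOf_dvd_iff_pow_eq_one.mp]
    exact heq ▸ orderOf_map_dvd (QuotientGroup.mk' L) x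
  obtain ⟨t, ht⟩ := exists_orderOf_pow_pow_mul_eq hq hdvd hcop
  exact ⟨(y ^ orderOf x) ^ t * y, Set.mul_mem_mul (L.pow_mem hyq t) rfl, ht⟩

/-- Let `G ∈ 𝓔_c`, `L ≤ G`, and `x, y ∈ G \ L` such that the order
of `x` is an odd prime or `4`, and the orders of `Lx` and `Ly` in `G/L` coincide.
Then some `y' ∈ Ly` has the same order as `x`. -/
theorem stmt3 (G : Type*) [CommGroup G] [Finite G] (hG : InEc G)
    (L : Subgroup G) (x y : G) (hx : x ∉ L) (hy : y ∉ L)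
    (hord : ((orderOf x).Prime ∧ Odd (orderOf x)) ∨ orderOf x = 4)
    (heq : orderOf (QuotientGroup.mk x : G ⧸ L) = orderOf (QuotientGroup.mk y : G ⧸ L)) :
    ∃ y' ∈ (L : Set G) * {y}, orderOf y' = orderOf x :=
  stmt3_general G hG L x y hy hord heq

end Paper
end
end

section
/- Let 𝒜 be a cyclotomic S-ring over a finite cyclic group G. Then 𝒜 is Cayley minimal; that is, Aut_G(𝒜) is the only subgroup K ≤ Aut(G) whose orbits on G coincide with the orbits of Aut_G(𝒜) on G. -/
open scoped Pointwise

noncomputable section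

namespace Paper

/-- A cyclotomic S-ring over a finite cyclic group is Cayley
minimal: `Aut_G(𝒜)` is the only subgroup of `Aut(G)` whose orbits on `G` coincide
with the orbits of `Aut_G(𝒜)`. -/
theorem stmt9 (G : Type*) [Group G] [Finite G] (hcyc : IsCyclic G)
    (A : SRing G) (hA : A.IsCyclotomic) :
    A.IsCayleyMinimal := by
  classical
  obtain ⟨g, hg⟩ := hcyc.exists_generator
  -- an automorphism of a cyclic group is determined by the image of a generator
  have hinj : ∀ φ ψ : MulAut G, φ g = ψ g → φ = ψ := by
    intro φ ψ h
    ext x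
    obtain ⟨n, rfl⟩ := hg x
    simp only [map_zpow, h]
  -- `Aut_G(𝒜)` contains the identity and is closed under mul and inv
  have hone : (1 : MulAut G) ∈ A.autGSet := by
    intro X hX
    have : Prod.map (⇑((1 : MulAut G).toEquiv : Equiv.Perm G))
        (⇑((1 : MulAut G).toEquiv : Equiv.Perm G)) = id := by
      funext p; cases p; rfl
    rw [this, Set.image_id]
  have hmul : ∀ φ ψ : MulAut G, φ ∈ A.autGSet → ψ ∈ A.autGSet →
      φ * ψ ∈ A.autGSet := by
    intro φ ψ hφ ψh X hX
    have hcomp : Prod.map (⇑(((φ * ψ) : MulAut G).toEquiv : Equiv.Perm G))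
        (⇑(((φ * ψ) : MulAut G).toEquiv : Equiv.Perm G)) =
        (Prod.map (⇑(φ.toEquiv : Equiv.Perm G)) (⇑(φ.toEquiv : Equiv.Perm G))) ∘
        (Prod.map (⇑(ψ.toEquiv : Equiv.Perm G)) (⇑(ψ.toEquiv : Equiv.Perm G))) := by
      funext p; cases p; rfl
    rw [hcomp, Set.image_comp, ψh X hX, hφ X hX]
  have hinv : ∀ φ : MulAut G, φ ∈ A.autGSet → φ⁻¹ ∈ A.autGSet := by
    intro φ hφ X hX
    have hid : ∀ (e : Equiv.Perm G) (S : Set (G × G)),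
        Prod.map (⇑e⁻¹) (⇑e⁻¹) '' (Prod.map (⇑e) (⇑e) '' S) = S := by
      intro e S
      rw [← Set.image_comp]
      have : (Prod.map (⇑e⁻¹) (⇑e⁻¹)) ∘ (Prod.map (⇑e) (⇑e)) = id := by
        funext p; cases p; simp
      rw [this, Set.image_id]
    have h1 : (⇑((φ⁻¹ : MulAut G).toEquiv : Equiv.Perm G)) =
        (⇑((φ.toEquiv : Equiv.Perm G))⁻¹) := by
      funext x; rfl
    calc Prod.map (⇑((φ⁻¹ : MulAut G).toEquiv : Equiv.Perm G))
          (⇑((φ⁻¹ : MulAut G).toEquiv : Equiv.Perm G)) '' Rel X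
        = Prod.map (⇑((φ.toEquiv : Equiv.Perm G))⁻¹)
            (⇑((φ.toEquiv : Equiv.Perm G))⁻¹) '' Rel X := by rw [h1]
      _ = Prod.map (⇑((φ.toEquiv : Equiv.Perm G))⁻¹)
            (⇑((φ.toEquiv : Equiv.Perm G))⁻¹) ''
            (Prod.map (⇑(φ.toEquiv : Equiv.Perm G))
              (⇑(φ.toEquiv : Equiv.Perm G)) '' Rel X) := by rw [hφ X hX]
      _ = Rel X := hid _ _
  intro K hK
  ext φ
  constructor
  · intro hφ
    have hO : ((fun ψ : MulAut G => ψ g) '' (K : Set (MulAut G))) ∈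
        setOrbits A.autGSet := by
      rw [← hK]; exact ⟨g, rfl⟩
    obtain ⟨h, hh⟩ := hO
    have hh' : (fun ψ : MulAut G => ψ h) '' A.autGSet =
        (fun ψ : MulAut G => ψ g) '' (K : Set (MulAut G)) := hh
    have hg1 : g ∈ (fun ψ : MulAut G => ψ h) '' A.autGSet := by
      rw [hh']; exact ⟨1, K.one_mem, by simp⟩
    obtain ⟨ψ₀, hψ₀, hψ₀g'⟩ := hg1
    have hψ₀g : ψ₀ h = g := hψ₀g'
    have hφ1 : φ g ∈ (fun ψ : MulAut G => ψ h) '' A.autGSet := by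
      rw [hh']; exact ⟨φ, hφ, rfl⟩
    obtain ⟨ψ₁, hψ₁, hψ₁g'⟩ := hφ1
    have hψ₁g : ψ₁ h = φ g := hψ₁g'
    have key : φ = ψ₁ * ψ₀⁻¹ := by
      apply hinj
      have : ψ₀⁻¹ g = h := by rw [← hψ₀g]; simp
      show φ g = ψ₁ (ψ₀⁻¹ g)
      rw [this, hψ₁g]
    rw [key]
    exact hmul _ _ hψ₁ (hinv _ hψ₀)
  · intro hφ
    have hO : ((fun ψ : MulAut G => ψ g) '' A.autGSet) ∈
        setOrbits (K : Set (MulAut G)) := by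
      rw [hK]; exact ⟨g, rfl⟩
    obtain ⟨h, hh⟩ := hO
    have hh' : (fun ψ : MulAut G => ψ h) '' (K : Set (MulAut G)) =
        (fun ψ : MulAut G => ψ g) '' A.autGSet := hh
    have hg1 : g ∈ (fun ψ : MulAut G => ψ h) '' (K : Set (MulAut G)) := by
      rw [hh']; exact ⟨1, hone, by simp⟩
    obtain ⟨k₀, hk₀, hk₀g'⟩ := hg1
    have hk₀g : k₀ h = g := hk₀g'
    have hφ1 : φ g ∈ (fun ψ : MulAut G => ψ h) '' (K : Set (MulAut G)) := by
      rw [hh']; exact ⟨φ, hφ, rfl⟩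
    obtain ⟨k₁, hk₁, hk₁g'⟩ := hφ1
    have hk₁g : k₁ h = φ g := hk₁g'
    have key : φ = k₁ * k₀⁻¹ := by
      apply hinj
      have : k₀⁻¹ g = h := by rw [← hk₀g]; simp
      show φ g = k₁ (k₀⁻¹ g)
      rw [this, hk₁g]
    rw [key]
    exact K.mul_mem hk₁ (K.inv_mem hk₀)

end Paper
end
end

section
/- Let G be a group of prime order and 𝒜 an S-ring over G. Then 𝒜 is cyclotomic, i.e., there exists K ≤ Aut(G) such that the basic sets of 𝒜 are exactly the orbits of K on G. -/
open scoped Pointwise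

noncomputable section

open Polynomial in
theorem IsPrimitiveRoot.eq_of_sum_smul_pow_eq_zero {L : Type*} [Field L] [CharZero L] {ζ : L}
    {n : ℕ} (hp : (n + 1).Prime) (hζ : IsPrimitiveRoot ζ (n + 1)) {c : Fin (n + 1) → ℚ}
    (hc : ∑ k, c k • ζ ^ (k : ℕ) = 0) (i j : Fin (n + 1)) : c i = c j := by
  have hdeg : (minpoly ℚ ζ).natDegree = n := by
    rw [← cyclotomic_eq_minpoly_rat hζ n.succ_pos, natDegree_cyclotomic, Nat.totient_prime hp,
      Nat.add_sub_cancel]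
  have hli : LinearIndependent ℚ fun i : Fin n => ζ ^ (i : ℕ) := hdeg ▸ linearIndependent_pow ζ
  have hgeom : ∑ k : Fin (n + 1), ζ ^ (k : ℕ) = 0 := by
    rw [Fin.sum_univ_eq_sum_range (ζ ^ ·), hζ.geom_sum_eq_zero hp.one_lt]
  have hrel : ∑ i : Fin n, (c i.castSucc - c (Fin.last n)) • ζ ^ (i : ℕ) =
      ∑ k, c k • ζ ^ (k : ℕ) - c (Fin.last n) • ∑ k : Fin (n + 1), ζ ^ (k : ℕ) := by
    simp only [Fin.sum_univ_castSucc, sub_smul, Finset.sum_sub_distrib, Finset.smul_sum,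
      smul_add, Fin.val_castSucc]
    abel
  rw [hc, hgeom, smul_zero, sub_zero] at hrel
  have hlast : ∀ k, c k = c (Fin.last n) := Fin.lastCases rfl fun i =>
    sub_eq_zero.1 (Fintype.linearIndependent_iff.1 hli _ hrel i)
  rw [hlast i, hlast j]

theorem MonoidHom.eq_of_linearCombination_eq_zero {G L : Type*} [Group G] [Fintype G] [Field L]
    [CharZero L] (hp : (Nat.card G).Prime) {χ : G →* L} (hχ : Function.Injective χ)
    {f : G → ℚ} (hf : Fintype.linearCombination ℚ χ f = 0) (g h : G) : f g = f h := by
  obtain ⟨n, hn⟩ : ∃ n, Nat.card G = n + 1 := Nat.exists_eq_add_one.2 hp.pos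
  have : Fact (Nat.card G).Prime := ⟨hp⟩
  have := isCyclic_of_prime_card (α := G) rfl
  obtain ⟨γ, hγ⟩ := IsCyclic.exists_generator (α := G)
  have hord : orderOf γ = n + 1 := by rw [orderOf_eq_card_of_forall_mem_zpowers hγ, hn]
  have hlt (k : Fin (n + 1)) : (k : ℕ) ∈ Set.Iio (orderOf γ) := by
    rw [Set.mem_Iio, hord]
    exact k.is_lt
  have hpow : Function.Bijective fun k : Fin (n + 1) => γ ^ (k : ℕ) := by
    refine (Fintype.bijective_iff_injective_and_card _).2 ⟨fun i j hij => ?_, ?_⟩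
    · exact Fin.ext (pow_injOn_Iio_orderOf (hlt i) (hlt j) hij)
    · rw [Fintype.card_fin, ← hn, Nat.card_eq_fintype_card]
  have hζ : IsPrimitiveRoot (χ γ) (n + 1) := by
    rw [← hord, ← orderOf_injective χ hχ γ]
    exact IsPrimitiveRoot.orderOf _
  have hc : ∑ k : Fin (n + 1), f (γ ^ (k : ℕ)) • χ γ ^ (k : ℕ) = 0 := by
    rw [← hf, Fintype.linearCombination_apply]
    exact Fintype.sum_bijective _ hpow _ _ fun k => by rw [map_pow]
  obtain ⟨i, rfl⟩ := hpow.2 g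
  obtain ⟨j, rfl⟩ := hpow.2 h
  exact IsPrimitiveRoot.eq_of_sum_smul_pow_eq_zero (hn ▸ hp) hζ hc i j

theorem MonoidHom.eq_of_linearCombination_indicator_eq {G L : Type*} [Group G] [Fintype G]
    [Field L] [CharZero L] (hp : (Nat.card G).Prime) {χ : G →* L} (hχ : Function.Injective χ)
    {X Y : Set G} (h : Fintype.linearCombination ℚ χ (X.indicator 1) =
      Fintype.linearCombination ℚ χ (Y.indicator 1))
    {a : G} (ha : a ∈ X ↔ a ∈ Y) : X = Y := by
  have hconst := MonoidHom.eq_of_linearCombination_eq_zero hp hχ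
    (f := X.indicator 1 - Y.indicator 1) (by rw [map_sub, h, sub_self])
  have ha' : X.indicator (1 : G → ℚ) a = Y.indicator 1 a := by
    classical simp only [Set.indicator_apply, ha]
  exact Set.indicator_one_inj ℚ <| funext fun g =>
    sub_eq_zero.1 ((hconst g a).trans (sub_eq_zero.2 ha'))

namespace MulEquiv

section CommRing

variable {G L : Type*} [Group G] [CommRing L] {n : ℕ} (e : G ≃* rootsOfUnity n L)

def rootsOfUnityChar : G →* L :=
  (Units.coeHom L).comp ((rootsOfUnity n L).subtype.comp e.toMonoidHom)

theorem rootsOfUnityChar_injective : Function.Injective e.rootsOfUnityChar := fun _ _ h =>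
  e.injective (Subtype.ext (Units.ext h))

def galoisAut (K : Type*) [CommRing K] [Algebra K L] : (L ≃ₐ[K] L) →* MulAut G where
  toFun σ := (e.trans ((σ : L ≃* L).restrictRootsOfUnity n)).trans e.symm
  map_one' := by ext; exact e.symm_apply_apply _
  map_mul' σ τ := by
    ext
    simp only [trans_apply, MulAut.mul_apply, apply_symm_apply, EmbeddingLike.apply_eq_iff_eq]
    rfl

theorem rootsOfUnityChar_galoisAut (K : Type*) [CommRing K] [Algebra K L] (σ : L ≃ₐ[K] L)
    (g : G) : e.rootsOfUnityChar (e.galoisAut K σ g) = σ (e.rootsOfUnityChar g) := by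
  change ((e (e.symm ((σ : L ≃* L).restrictRootsOfUnity n (e g))) : Lˣ) : L) = _
  rw [e.apply_symm_apply]
  rfl

end CommRing

theorem galoisAut_linearCombination_indicator {G L : Type*} [Group G] [Fintype G] [Field L]
    [CharZero L] {n : ℕ} (e : G ≃* rootsOfUnity n L) (σ : L ≃ₐ[ℚ] L) (X : Set G) :
    σ (Fintype.linearCombination ℚ e.rootsOfUnityChar (X.indicator 1)) =
      Fintype.linearCombination ℚ e.rootsOfUnityChar ((e.galoisAut ℚ σ • X).indicator 1) := by
  simp only [Fintype.linearCombination_apply, map_sum, map_rat_smul]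
  refine Fintype.sum_equiv (e.galoisAut ℚ σ).toEquiv _ _ fun g => ?_
  rw [toEquiv_eq_coe, coe_toEquiv, rootsOfUnityChar_galoisAut, ← MulAut.smul_def]
  congr 1
  classical
  simp only [Set.indicator_apply, Set.smul_mem_smul_set_iff, Pi.one_apply]

end MulEquiv

namespace Paper.SRing

section Partition

variable {G : Type*} [Group G] [Finite G] (A : SRing G)

theorem eq_of_mem_of_mem {X Y : Set G} (hX : X ∈ A.basic) (hY : Y ∈ A.basic) {g : G}
    (hgX : g ∈ X) (hgY : g ∈ Y) : X = Y :=
  (A.cover g).unique ⟨hX, hgX⟩ ⟨hY, hgY⟩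

def basicOf (g : G) : Set G := (A.cover g).exists.choose

theorem basicOf_mem (g : G) : A.basicOf g ∈ A.basic := (A.cover g).exists.choose_spec.1

theorem mem_basicOf (g : G) : g ∈ A.basicOf g := (A.cover g).exists.choose_spec.2

theorem basicOf_eq {X : Set G} (hX : X ∈ A.basic) {g : G} (hg : g ∈ X) : A.basicOf g = X :=
  A.eq_of_mem_of_mem (A.basicOf_mem g) hX (A.mem_basicOf g) hg

theorem basic_eq_range_basicOf : A.basic = Set.range A.basicOf := by
  ext X
  refine ⟨fun hX => ?_, ?_⟩
  · obtain ⟨g, hg⟩ := A.nonempty X hX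
    exact ⟨g, A.basicOf_eq hX hg⟩
  · rintro ⟨g, rfl⟩
    exact A.basicOf_mem g

def basicStabilizer : Subgroup (MulAut G) :=
  ⨅ X ∈ A.basic, MulAction.stabilizer (MulAut G) X

theorem mem_basicStabilizer {φ : MulAut G} :
    φ ∈ A.basicStabilizer ↔ ∀ X ∈ A.basic, φ • X = X := by
  simp only [basicStabilizer, Subgroup.mem_iInf, MulAction.mem_stabilizer_iff]

theorem isCyclotomic_of_basicOf_subset_orbit
    (h : ∀ g, A.basicOf g ⊆ MulAction.orbit A.basicStabilizer g) : A.IsCyclotomic := by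
  refine ⟨A.basicStabilizer, ?_⟩
  rw [basic_eq_range_basicOf, setOrbits]
  congr 1
  ext g : 1
  refine Set.Subset.antisymm (fun x hx => ?_) ?_
  · obtain ⟨⟨φ, hφ⟩, rfl⟩ := h g hx
    exact ⟨φ, hφ, rfl⟩
  · rintro _ ⟨φ, hφ, rfl⟩
    rw [← (A.mem_basicStabilizer.1 hφ) _ (A.basicOf_mem g)]
    exact Set.smul_mem_smul_set (A.mem_basicOf g)

def constOnBasic (R : Type*) [Semiring R] : Submodule R (G → R) where
  carrier := {f | ∀ X ∈ A.basic, ∀ g ∈ X, ∀ h ∈ X, f g = f h}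
  zero_mem' _ _ _ _ _ _ := rfl
  add_mem' hf hf' X hX g hg h hh := congrArg₂ (· + ·) (hf X hX g hg h hh) (hf' X hX g hg h hh)
  smul_mem' c _ hf X hX g hg h hh := congrArg (c • ·) (hf X hX g hg h hh)

variable {A}

theorem const_mem_constOnBasic {R : Type*} [Semiring R] (c : R) :
    (fun _ => c) ∈ A.constOnBasic R :=
  fun _ _ _ _ _ _ => rfl

theorem indicator_mem_constOnBasic {R : Type*} [Semiring R] {X : Set G} (hX : X ∈ A.basic) :
    X.indicator 1 ∈ A.constOnBasic R := by
  have hmem : ∀ Y ∈ A.basic, ∀ g ∈ Y, ∀ h ∈ Y, g ∈ X → h ∈ X := fun Y hY g hg h hh hgX =>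
    A.eq_of_mem_of_mem hY hX hg hgX ▸ hh
  intro Y hY g hg h hh
  by_cases hgX : g ∈ X
  · rw [Set.indicator_of_mem hgX, Set.indicator_of_mem (hmem Y hY g hg h hh hgX)]
    rfl
  · rw [Set.indicator_of_notMem hgX,
      Set.indicator_of_notMem fun hhX => hgX (hmem Y hY h hh g hg hhX)]

end Partition

variable {G : Type*} [Group G] [Fintype G] (A : SRing G) {L : Type*} [Field L] [CharZero L]

section CharacterSpan

variable (χ : G →* L)

theorem lift_sumElems (X : Set G) :
    MonoidAlgebra.lift ℤ L G χ (sumElems X) = Fintype.linearCombination ℚ χ (X.indicator 1) := by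
  classical
  simp only [sumElems, map_sum, MonoidAlgebra.lift_single, Fintype.linearCombination_apply,
    Set.indicator_apply, Pi.one_apply, ite_smul, one_smul, zero_smul, ← Finset.sum_filter]
  congr 1
  ext
  simp

def charSpan : Submodule ℚ L :=
  Submodule.span ℚ (MonoidAlgebra.lift ℤ L G χ '' A.span)

theorem charSpan_le_map_constOnBasic :
    A.charSpan χ ≤ (A.constOnBasic ℚ).map (Fintype.linearCombination ℚ χ) := by
  rw [charSpan, Submodule.span_le]
  rintro _ ⟨a, ha, rfl⟩
  induction ha using Submodule.span_induction with
  | mem _ hx =>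
    obtain ⟨X, hX, rfl⟩ := hx
    rw [lift_sumElems]
    exact ⟨_, indicator_mem_constOnBasic hX, rfl⟩
  | zero => rw [map_zero]; exact zero_mem _
  | add _ _ _ _ hx hy => rw [map_add]; exact add_mem hx hy
  | smul n _ _ hx =>
    rw [map_zsmul, ← Int.cast_smul_eq_zsmul ℚ]
    exact Submodule.smul_mem _ _ hx

theorem one_mem_charSpan : (1 : L) ∈ A.charSpan χ := by
  refine Submodule.subset_span ⟨sumElems {1}, Submodule.subset_span ⟨_, A.one_mem, rfl⟩, ?_⟩
  rw [sumElems, Set.Finite.toFinset_singleton, Finset.sum_singleton, MonoidAlgebra.lift_single,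
    map_one, one_smul]

theorem mul_mem_charSpan {x y : L} (hx : x ∈ A.charSpan χ) (hy : y ∈ A.charSpan χ) :
    x * y ∈ A.charSpan χ := by
  refine (Submodule.span_mul_span ℚ _ _).le.trans ?_ (Submodule.mul_mem_mul hx hy)
  rw [Submodule.span_le]
  rintro _ ⟨_, ⟨a, ha, rfl⟩, _, ⟨b, hb, rfl⟩, rfl⟩
  exact Submodule.subset_span ⟨a * b, A.mul_mem a b ha hb, map_mul _ a b⟩

def charField [FiniteDimensional ℚ L] : IntermediateField ℚ L :=
  Algebra.IsAlgebraic.toIntermediateField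
    ((A.charSpan χ).toSubalgebra (A.one_mem_charSpan χ) fun _ _ => A.mul_mem_charSpan χ)

theorem mem_charField [FiniteDimensional ℚ L] {x : L} :
    x ∈ A.charField χ ↔ x ∈ A.charSpan χ :=
  Iff.rfl

theorem indicator_mem_constOnBasic_of_mem_charSpan (hp : (Nat.card G).Prime)
    (hχ : Function.Injective χ) {O : Set G}
    (hO : Fintype.linearCombination ℚ χ (O.indicator 1) ∈ A.charSpan χ) :
    O.indicator 1 ∈ A.constOnBasic ℚ := by
  obtain ⟨c, hc, hcO⟩ := A.charSpan_le_map_constOnBasic χ hO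
  have hconst := MonoidHom.eq_of_linearCombination_eq_zero hp hχ
    (f := O.indicator 1 - c) (by rw [map_sub, hcO, sub_self])
  have hO_eq : O.indicator 1 = c + fun _ => O.indicator 1 1 - c 1 := by
    ext g
    have := hconst g 1
    simp only [Pi.sub_apply] at this
    rw [Pi.add_apply]
    linarith
  rw [hO_eq]
  exact add_mem hc (const_mem_constOnBasic _)

end CharacterSpan

variable [FiniteDimensional ℚ L] {n : ℕ}

theorem galoisAut_mem_basicStabilizer (hp : (Nat.card G).Prime) (e : G ≃* rootsOfUnity n L)
    {σ : L ≃ₐ[ℚ] L} (hσ : σ ∈ (A.charField e.rootsOfUnityChar).fixingSubgroup) :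
    e.galoisAut ℚ σ ∈ A.basicStabilizer := by
  refine A.mem_basicStabilizer.2 fun X hX => ?_
  refine MonoidHom.eq_of_linearCombination_indicator_eq hp e.rootsOfUnityChar_injective
    (a := 1) ?_ ?_
  · rw [← e.galoisAut_linearCombination_indicator]
    refine (IntermediateField.mem_fixingSubgroup_iff _ _).1 hσ _ ?_
    rw [mem_charField, ← lift_sumElems]
    exact Submodule.subset_span ⟨_, Submodule.subset_span ⟨X, hX, rfl⟩, rfl⟩
  · rw [Set.mem_smul_set_iff_inv_smul_mem, smul_one]

theorem basicOf_subset_orbit_basicStabilizer [IsGalois ℚ L] (hp : (Nat.card G).Prime)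
    (e : G ≃* rootsOfUnity n L) (g : G) :
    A.basicOf g ⊆ MulAction.orbit A.basicStabilizer g := by
  set K := (A.charField e.rootsOfUnityChar).fixingSubgroup.map (e.galoisAut ℚ)
  set O := MulAction.orbit K g
  have hfixed : Fintype.linearCombination ℚ e.rootsOfUnityChar (O.indicator 1) ∈
      IntermediateField.fixedField (A.charField e.rootsOfUnityChar).fixingSubgroup := by
    rintro ⟨σ, hσ⟩
    have hinv : e.galoisAut ℚ σ • O = O :=
      MulAction.smul_orbit (⟨_, Subgroup.mem_map_of_mem _ hσ⟩ : K) g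
    change σ _ = _
    rw [e.galoisAut_linearCombination_indicator, hinv]
  rw [IsGalois.fixedField_fixingSubgroup, mem_charField] at hfixed
  have hO := A.indicator_mem_constOnBasic_of_mem_charSpan _ hp e.rootsOfUnityChar_injective hfixed
  intro h hh
  have hgh := hO _ (A.basicOf_mem g) g (A.mem_basicOf g) h hh
  obtain ⟨⟨_, σ, hσ, rfl⟩, rfl⟩ : h ∈ O := (Set.indicator_eq_one_iff_mem ℚ).1 <|
    hgh ▸ (Set.indicator_eq_one_iff_mem ℚ).2 (MulAction.mem_orbit_self g)
  exact ⟨⟨_, A.galoisAut_mem_basicStabilizer hp e hσ⟩, rfl⟩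

end Paper.SRing

namespace Paper

/-- Every S-ring over a group of prime order is cyclotomic. -/
theorem stmt10 (G : Type*) [Group G] [Finite G] (hp : (Nat.card G).Prime)
    (A : SRing G) :
    A.IsCyclotomic := by
  have := Fintype.ofFinite G
  have : Fact (Nat.card G).Prime := ⟨hp⟩
  have : NeZero (Nat.card G) := ⟨hp.ne_zero⟩
  have := isCyclic_of_prime_card (α := G) rfl
  have : IsCyclotomicExtension {Nat.card G} ℚ (CyclotomicField (Nat.card G) ℚ) :=
    CyclotomicField.isCyclotomicExtension _ ℚ
  have := IsCyclotomicExtension.isGalois {Nat.card G} ℚ (CyclotomicField (Nat.card G) ℚ)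
  let e : G ≃* rootsOfUnity (Nat.card G) (CyclotomicField (Nat.card G) ℚ) :=
    mulEquivOfCyclicCardEq
      (IsCyclotomicExtension.zeta_spec (Nat.card G) ℚ _).card_rootsOfUnity.symm
  exact A.isCyclotomic_of_basicOf_subset_orbit (A.basicOf_subset_orbit_basicStabilizer hp e)

end Paper
end
end
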